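/- arXiv:2106.01015 — 3 statements merged into one kernel-verified Lean document; each statement's English description precedes it below -/
import Mathlib

section
/- Let n > 0, t > 0, and Q ∈ ℝ with t^(2n) + Q ≠ 0. Define p = -n²/t² and ρ = (n²/t²)(1 + (2/n)·(t^(2n) - Q)/(t^(2n) + Q)). Then -ρ < p holds if and only if |Q| < t^(2n). -/
open Real

theorem stmt_7 (n t Q : ℝ) (hn : 0 < n) (ht : 0 < t)
    (hQ : t ^ (2 * n) + Q ≠ 0)
    (p ρ : ℝ)
    (hp : p = -n ^ 2 / t ^ 2)
    (hρ : ρ = (n ^ 2 / t ^ 2) * (1 + (2 / n) * ((t ^ (2 * n) - Q) / (t ^ (2 * n) + Q)))) :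
    -ρ < p ↔ |Q| < t ^ (2 * n) := by
  have hT : 0 < t ^ (2 * n) := Real.rpow_pos_of_pos ht _
  set T := t ^ (2 * n) with hTdef
  have hn' : n ≠ 0 := ne_of_gt hn
  have ht2 : (0:ℝ) < t ^ 2 := by positivity
  have key : p + ρ = (2 * n / t ^ 2) * ((T - Q) / (T + Q)) := by
    rw [hp, hρ]
    field_simp
    ring
  have hc : 0 < 2 * n / t ^ 2 := by positivity
  rw [abs_lt]
  constructor
  · intro h
    have hsum : 0 < p + ρ := by linarith
    rw [key] at hsum
    have hx : 0 < (T - Q) / (T + Q) := by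
      by_contra hle
      push_neg at hle
      nlinarith
    rw [div_pos_iff] at hx
    rcases hx with ⟨h1, h2⟩ | ⟨h1, h2⟩
    · constructor <;> linarith
    · linarith
  · rintro ⟨h1, h2⟩
    have hx : 0 < (T - Q) / (T + Q) := by
      apply div_pos <;> linarith
    have : 0 < p + ρ := by rw [key]; positivity
    linarith
end

section
/- For γ = 2, the condition H₂ᴳ: ξ(π) := (2π+1)χ(π) - π > 0, with χ(π) = 4π²/((π+1)(π+1)), holds for π ∈ (π₂, 1) where π₂ = (2√2 - 1)/7, and fails (ξ(π) ≤ 0) for π ∈ (0, π₂]. -/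
theorem stmt_12 :
    ∀ π : ℝ, 0 < π → π < 1 →
      (((2 * Real.sqrt 2 - 1) / 7 < π →
          0 < (2 * π + 1) * (4 * π ^ 2 / (π + 1) ^ 2) - π) ∧
       (π ≤ (2 * Real.sqrt 2 - 1) / 7 →
          (2 * π + 1) * (4 * π ^ 2 / (π + 1) ^ 2) - π ≤ 0)) := by
  intro π hp hp1
  have hs : Real.sqrt 2 ^ 2 = 2 := Real.sq_sqrt (by norm_num)
  have hs0 : (0:ℝ) < Real.sqrt 2 := Real.sqrt_pos.mpr (by norm_num)
  have hd : (0:ℝ) < (π + 1) ^ 2 := by positivity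
  have hkey : (2 * π + 1) * (4 * π ^ 2 / (π + 1) ^ 2) - π
      = π * (7 * π ^ 2 + 2 * π - 1) / (π + 1) ^ 2 := by
    field_simp; ring
  constructor
  · intro h
    rw [hkey]
    apply div_pos _ hd
    have h7 : 2 * Real.sqrt 2 - 1 < 7 * π := by linarith [(div_lt_iff₀ (by norm_num : (0:ℝ) < 7)).mp h]
    have : 7 * π ^ 2 + 2 * π - 1 > 0 := by nlinarith [sq_nonneg (7 * π + 1 - 2 * Real.sqrt 2)]
    positivity
  · intro h
    rw [hkey]
    apply div_nonpos_of_nonpos_of_nonneg _ hd.le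
    have h7 : 7 * π ≤ 2 * Real.sqrt 2 - 1 := by linarith [(le_div_iff₀ (by norm_num : (0:ℝ) < 7)).mp h]
    have : 7 * π ^ 2 + 2 * π - 1 ≤ 0 := by nlinarith [sq_nonneg (7 * π + 1 + 2 * Real.sqrt 2)]
    nlinarith
end

section
/- For γ = 4/3, with χ(π) = (8/3)π²/((π+1)(π+1/3)), the quantity ξ(π) = (2π+1)χ(π) - π is positive for π ∈ (π₁, 1/3) and non-positive on (0, π₁], where π₁ = (√17 - 2)/13. -/
theorem stmt_13 :
    ∀ π : ℝ, 0 < π → π < 1 / 3 →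
      (((Real.sqrt 17 - 2) / 13 < π →
          0 < (2 * π + 1) * ((8 / 3) * π ^ 2 / ((π + 1) * (π + 1 / 3))) - π) ∧
       (π ≤ (Real.sqrt 17 - 2) / 13 →
          (2 * π + 1) * ((8 / 3) * π ^ 2 / ((π + 1) * (π + 1 / 3))) - π ≤ 0)) := by
  intro π hπ hπ3
  have hs : Real.sqrt 17 ^ 2 = 17 := Real.sq_sqrt (by norm_num)
  have hs0 : 0 < Real.sqrt 17 := Real.sqrt_pos.mpr (by norm_num)
  have hD : 0 < (π + 1) * (π + 1 / 3) := by nlinarith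
  have key : (2 * π + 1) * ((8 / 3) * π ^ 2 / ((π + 1) * (π + 1 / 3))) - π
      = π * (13 * π ^ 2 + 4 * π - 1) / (3 * ((π + 1) * (π + 1 / 3))) := by
    field_simp
    ring
  constructor
  · intro h
    rw [key]
    apply div_pos _ (by linarith)
    have hq : 0 < 13 * π ^ 2 + 4 * π - 1 := by
      nlinarith [mul_pos (sub_pos.mpr h) (show (0:ℝ) < 13 * π + Real.sqrt 17 + 2 by nlinarith)]
    positivity
  · intro h
    rw [key]
    apply div_nonpos_of_nonpos_of_nonneg _ (by linarith)
    have hq : 13 * π ^ 2 + 4 * π - 1 ≤ 0 := by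
      nlinarith [mul_nonneg (sub_nonneg.mpr h) (show (0:ℝ) ≤ 13 * π + Real.sqrt 17 + 2 by nlinarith)]
    nlinarith
end
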